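/- There exists a real constant t₀ ≥ 0 such that for all integers d ≥ 1, g ≥ 0 and all real t ≥ t₀, the sum over all d-tuples (g₁,…,g_d) of nonnegative integers with g₁+⋯+g_d = g of ((1 + g/2)/((1 + g₁/2)⋯(1 + g_d/2)))^t is at most 4^(d-1). -/

import Mathlib

/-!
Write `w n = 1 + n / 2`. Splitting off the first part, the sum for `d + 1` parts at `g` is the sum
over `g₁ + g' = g` of `(w g / (w g₁ * w g'))^t` times the sum for `d` parts at `g'`, so by induction
on `d` it suffices that the two-part sum is at most `4`. For `i ≤ j` the ratio
`w (i + j) / (w i * w j)` is at most its diagonal value `w (2 i) / (w i)^2 = 4 (i + 1) / (i + 2)^2`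
(after cross-multiplying this is `i (j - i) ≥ 0`), so the two-part sum is at most twice
`∑ₕ (4 (h + 1) / (h + 2)^2)^t`. That series starts with `1`, and its other terms are at most `8/9`
and `O(1/h²)`, which makes it at most `2` as soon as `t ≥ 20`.
-/

open Finset

theorem Finset.Nat.sum_antidiagonalTuple_succ {M : Type*} [AddCommMonoid M] (k n : ℕ)
    (f : (Fin (k + 1) → ℕ) → M) :
    ∑ x ∈ Nat.antidiagonalTuple (k + 1) n, f x
      = ∑ p ∈ antidiagonal n, ∑ y ∈ Nat.antidiagonalTuple k p.2, f (Fin.cons p.1 y) := by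
  have hval : (antidiagonal n).val = (List.Nat.antidiagonal n : Multiset (ℕ × ℕ)) := rfl
  simp only [Finset.sum, hval, Nat.antidiagonalTuple, Multiset.Nat.antidiagonalTuple,
    List.Nat.antidiagonalTuple, Multiset.map_coe, Multiset.sum_coe, List.flatMap_def,
    List.map_flatten, List.sum_flatten, List.map_map, Function.comp_def]

theorem sum_range_inv_sq_add_three_le (n : ℕ) :
    ∑ h ∈ range n, (((h + 3 : ℕ) : ℝ) ^ 2)⁻¹ ≤ 1 / 2 := by
  have hsub : Ico 3 (n + 3) ⊆ Ioc 2 (n + 3) := by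
    intro i
    simp only [mem_Ico, mem_Ioc]
    omega
  calc ∑ h ∈ range n, (((h + 3 : ℕ) : ℝ) ^ 2)⁻¹
      = ∑ i ∈ Ico 3 (n + 3), ((i : ℝ) ^ 2)⁻¹ := by
        rw [sum_Ico_eq_sum_range, Nat.add_sub_cancel]
        simp only [add_comm]
    _ ≤ ∑ i ∈ Ioc 2 (n + 3), ((i : ℝ) ^ 2)⁻¹ :=
        sum_le_sum_of_subset_of_nonneg hsub fun _ _ _ => by positivity
    _ ≤ ((2 : ℕ) : ℝ)⁻¹ - ((n + 3 : ℕ) : ℝ)⁻¹ := sum_Ioc_inv_sq_le_sub two_ne_zero (by omega)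
    _ ≤ 1 / 2 := by norm_num; positivity

namespace CompositionRatio

noncomputable def weight (n : ℕ) : ℝ := 1 + n / 2

theorem weight_pos (n : ℕ) : 0 < weight n := by
  unfold weight
  positivity

noncomputable def splitRatio (i j : ℕ) : ℝ := weight (i + j) / (weight i * weight j)

theorem splitRatio_nonneg (i j : ℕ) : 0 ≤ splitRatio i j :=
  div_nonneg (weight_pos _).le (mul_pos (weight_pos i) (weight_pos j)).le

theorem splitRatio_comm (i j : ℕ) : splitRatio i j = splitRatio j i := by
  rw [splitRatio, splitRatio, add_comm, mul_comm]

theorem splitRatio_le_splitRatio_self {i j : ℕ} (hij : i ≤ j) :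
    splitRatio i j ≤ splitRatio i i := by
  have hij' : (i : ℝ) ≤ j := by exact_mod_cast hij
  unfold splitRatio weight
  rw [div_le_div_iff₀ (by positivity) (by positivity)]
  push_cast
  nlinarith [mul_nonneg (mul_nonneg (Nat.cast_nonneg (α := ℝ) i) (sub_nonneg.2 hij'))
    (Nat.cast_nonneg (α := ℝ) i)]

theorem splitRatio_self (i : ℕ) : splitRatio i i = 4 * (i + 1) / (i + 2) ^ 2 := by
  unfold splitRatio weight
  push_cast
  field_simp
  ring

theorem splitRatio_self_le_one (i : ℕ) : splitRatio i i ≤ 1 := by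
  rw [splitRatio_self, div_le_one (by positivity)]
  nlinarith [sq_nonneg (i : ℝ)]

theorem splitRatio_self_succ_le (i : ℕ) : splitRatio (i + 1) (i + 1) ≤ 8 / 9 := by
  rw [splitRatio_self, div_le_div_iff₀ (by positivity) (by positivity)]
  push_cast
  nlinarith [Nat.cast_nonneg (α := ℝ) i]

theorem splitRatio_self_sq_le (i : ℕ) : splitRatio i i ^ 2 ≤ 16 * (((i + 2 : ℕ) : ℝ) ^ 2)⁻¹ := by
  rw [splitRatio_self, ← div_eq_mul_inv, div_pow, div_le_div_iff₀ (by positivity) (by positivity)]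
  push_cast
  have hi : (0 : ℝ) ≤ i := Nat.cast_nonneg i
  have hsq : ((i : ℝ) + 1) ^ 2 ≤ ((i : ℝ) + 2) ^ 2 := by nlinarith
  nlinarith [mul_le_mul_of_nonneg_right hsq (by positivity : (0 : ℝ) ≤ ((i : ℝ) + 2) ^ 2)]

variable {t : ℝ}

theorem rpow_splitRatio_le_add (ht : 0 ≤ t) (i j : ℕ) :
    splitRatio i j ^ t ≤ splitRatio i i ^ t + splitRatio j j ^ t := by
  have hi := Real.rpow_nonneg (splitRatio_nonneg i i) t
  have hj := Real.rpow_nonneg (splitRatio_nonneg j j) t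
  rcases le_total i j with hij | hji
  · have := Real.rpow_le_rpow (splitRatio_nonneg i j) (splitRatio_le_splitRatio_self hij) ht
    linarith
  · have := Real.rpow_le_rpow (splitRatio_nonneg i j)
      ((splitRatio_comm i j).trans_le (splitRatio_le_splitRatio_self hji)) ht
    linarith

theorem sum_range_rpow_splitRatio_self_le (ht : 20 ≤ t) (n : ℕ) :
    ∑ h ∈ range (n + 1), splitRatio h h ^ t ≤ 2 := by
  have htail : ∀ h : ℕ, splitRatio (h + 1) (h + 1) ^ t
      ≤ (8 / 9) ^ 18 * (16 * (((h + 3 : ℕ) : ℝ) ^ 2)⁻¹) := fun h => by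
    set r := splitRatio (h + 1) (h + 1)
    have hr : 0 < r := by rw [show r = _ from splitRatio_self (h + 1)]; positivity
    calc r ^ t ≤ r ^ ((20 : ℕ) : ℝ) :=
          Real.rpow_le_rpow_of_exponent_ge hr (splitRatio_self_le_one _) (by exact_mod_cast ht)
      _ = r ^ 18 * r ^ 2 := by rw [Real.rpow_natCast]; ring
      _ ≤ (8 / 9) ^ 18 * (16 * (((h + 3 : ℕ) : ℝ) ^ 2)⁻¹) :=
          mul_le_mul (pow_le_pow_left₀ hr.le (splitRatio_self_succ_le h) 18)
            (splitRatio_self_sq_le (h + 1)) (by positivity) (by positivity)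
  have hhead : splitRatio 0 0 ^ t = 1 := by
    rw [splitRatio_self]
    norm_num
  calc ∑ h ∈ range (n + 1), splitRatio h h ^ t
      = ∑ h ∈ range n, splitRatio (h + 1) (h + 1) ^ t + 1 := by rw [sum_range_succ', hhead]
    _ ≤ (8 / 9) ^ 18 * (16 * ∑ h ∈ range n, (((h + 3 : ℕ) : ℝ) ^ 2)⁻¹) + 1 := by
        rw [mul_sum, mul_sum]
        gcongr with h
        exact htail h
    _ ≤ (8 / 9) ^ 18 * (16 * (1 / 2)) + 1 := by gcongr; exact sum_range_inv_sq_add_three_le n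
    _ ≤ 2 := by norm_num

theorem sum_antidiagonal_rpow_splitRatio_le (ht : 20 ≤ t) (n : ℕ) :
    ∑ p ∈ antidiagonal n, splitRatio p.1 p.2 ^ t ≤ 4 := by
  set f : ℕ → ℝ := fun h => splitRatio h h ^ t
  have hfst : ∑ p ∈ antidiagonal n, f p.1 = ∑ h ∈ range (n + 1), f h :=
    Nat.sum_antidiagonal_eq_sum_range_succ (fun i _ => f i) n
  have hsnd : ∑ p ∈ antidiagonal n, f p.2 = ∑ p ∈ antidiagonal n, f p.1 :=
    Nat.sum_antidiagonal_swap (f := fun p => f p.1)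
  calc ∑ p ∈ antidiagonal n, splitRatio p.1 p.2 ^ t
      ≤ ∑ p ∈ antidiagonal n, (f p.1 + f p.2) :=
        sum_le_sum fun p _ => rpow_splitRatio_le_add (by linarith) p.1 p.2
    _ = 2 * ∑ h ∈ range (n + 1), f h := by rw [sum_add_distrib, hsnd, hfst, two_mul]
    _ ≤ 2 * 2 := by gcongr; exact sum_range_rpow_splitRatio_self_le ht n
    _ = 4 := by norm_num

theorem weight_div_prod_cons {k : ℕ} (a b : ℕ) (y : Fin k → ℕ) :
    weight (a + b) / ∏ i, weight ((Fin.cons a y : Fin (k + 1) → ℕ) i)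
      = splitRatio a b * (weight b / ∏ i, weight (y i)) := by
  have hy : (∏ i, weight (y i)) ≠ 0 := (prod_pos fun i _ => weight_pos (y i)).ne'
  have ha := (weight_pos a).ne'
  have hb := (weight_pos b).ne'
  rw [Fin.prod_univ_succ, Fin.cons_zero]
  simp only [Fin.cons_succ]
  unfold splitRatio
  field_simp

theorem sum_antidiagonalTuple_rpow_le (ht : 20 ≤ t) (k n : ℕ) :
    ∑ x ∈ Nat.antidiagonalTuple (k + 1) n, (weight n / ∏ i, weight (x i)) ^ t ≤ 4 ^ k := by
  induction k generalizing n with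
  | zero =>
    simp [Nat.antidiagonalTuple_one, div_self (weight_pos n).ne']
  | succ k ih =>
    have hsplit : ∀ p ∈ antidiagonal n,
        ∑ y ∈ Nat.antidiagonalTuple (k + 1) p.2,
          (weight n / ∏ i, weight ((Fin.cons p.1 y : Fin (k + 2) → ℕ) i)) ^ t
        ≤ splitRatio p.1 p.2 ^ t * 4 ^ k := fun p hp => by
      rw [← mem_antidiagonal.1 hp]
      simp_rw [weight_div_prod_cons, Real.mul_rpow (splitRatio_nonneg _ _)
        (div_nonneg (weight_pos _).le (prod_pos fun i _ => weight_pos _).le), ← mul_sum]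
      exact mul_le_mul_of_nonneg_left (ih p.2) (Real.rpow_nonneg (splitRatio_nonneg _ _) t)
    calc ∑ x ∈ Nat.antidiagonalTuple (k + 2) n, (weight n / ∏ i, weight (x i)) ^ t
        ≤ ∑ p ∈ antidiagonal n, splitRatio p.1 p.2 ^ t * 4 ^ k := by
          rw [Nat.sum_antidiagonalTuple_succ]
          exact sum_le_sum hsplit
      _ ≤ 4 * 4 ^ k := by
          rw [← sum_mul]
          gcongr
          exact sum_antidiagonal_rpow_splitRatio_le ht n
      _ = 4 ^ (k + 1) := by ring

end CompositionRatio

/-- There is `t₀ ≥ 0` such that for all `d ≥ 1`, `g ≥ 0` and `t ≥ t₀`, the sum over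
`d`-tuples of nonnegative integers with sum `g` of
`((1 + g/2)/((1 + g₁/2)⋯(1 + g_d/2)))^t` is at most `4^(d-1)`. -/
theorem stmt2 : ∃ t₀ : ℝ, 0 ≤ t₀ ∧ ∀ (d g : ℕ), 1 ≤ d → ∀ t : ℝ, t₀ ≤ t →
    ∑ x ∈ Finset.Nat.antidiagonalTuple d g,
      ((1 + (g : ℝ) / 2) / ∏ i, (1 + (x i : ℝ) / 2)) ^ t ≤ (4 : ℝ) ^ (d - 1) := by
  refine ⟨20, by norm_num, fun d g hd t ht => ?_⟩
  obtain ⟨k, rfl⟩ := Nat.exists_eq_add_of_le' hd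
  simpa only [CompositionRatio.weight, Nat.add_sub_cancel] using
    CompositionRatio.sum_antidiagonalTuple_rpow_le ht k g
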